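/- If G is a k-regular graph with diameter at most 2 and χ(G) ≥ 4, then χ₂(G) − χ(G) ≤ 1. -/

import Mathlib

open SimpleGraph Finset

/-- A proper coloring of a graph. -/
def ProperColoring {V α : Type*} (G : SimpleGraph V) (c : V → α) : Prop :=
  ∀ ⦃u v⦄, G.Adj u v → c u ≠ c v

/-- The chromatic number, as a natural number. -/
noncomputable def chi {V : Type*} (G : SimpleGraph V) : ℕ := sInf {n | G.Colorable n}

/-- A dynamic coloring: proper, and every vertex of degree at least 2 sees
at least two distinct colors in its neighborhood. -/
def DynColoring {V α : Type*} (G : SimpleGraph V) [Fintype V] [DecidableRel G.Adj]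
    (c : V → α) : Prop :=
  ProperColoring G c ∧ ∀ v, 2 ≤ G.degree v → ∃ u w, G.Adj v u ∧ G.Adj v w ∧ c u ≠ c w

/-- The dynamic chromatic number. -/
noncomputable def dynChi {V : Type*} (G : SimpleGraph V) [Fintype V] [DecidableRel G.Adj] : ℕ :=
  sInf {n | ∃ c : V → Fin n, DynColoring G c}

/-- The independence number. -/
noncomputable def alpha {V : Type*} (G : SimpleGraph V) : ℕ :=
  sSup {n | ∃ s : Finset V, (∀ u ∈ s, ∀ v ∈ s, ¬ G.Adj u v) ∧ s.card = n}

/-- The square of a graph: distinct vertices adjacent iff at distance at most 2. -/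
def graphSq {V : Type*} (G : SimpleGraph V) : SimpleGraph V where
  Adj u v := u ≠ v ∧ (G.Adj u v ∨ ∃ w, G.Adj u w ∧ G.Adj w v)
  symm := by
    constructor
    rintro u v ⟨h1, h2⟩
    refine ⟨h1.symm, ?_⟩
    rcases h2 with h | ⟨w, hw1, hw2⟩
    · exact .inl h.symm
    · exact .inr ⟨w, hw2.symm, hw1.symm⟩
  loopless := by constructor; rintro u ⟨h, _⟩; exact h rfl

/-!
Fix a proper `χ(G)`-colouring and call a vertex *bad* when its neighbourhood is monochromatic.
Giving one new colour to an independent set `S` that meets the neighbourhood of every bad vertex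
but contains no whole neighbourhood produces a dynamic colouring. Greedy colouring gives `k ≥ 3`.

In diameter two, non-adjacent bad vertices `u, v` see the same colour, and then `N(v) ⊆ N(u)`: a
neighbour of `v` outside `N(u)` would be adjacent to a neighbour of `u` of the same colour. So if
no two bad vertices are adjacent, `S = {x}` works for any neighbour `x` of a bad vertex. If `v₀u₀`
is an edge between bad vertices, every bad vertex is adjacent to `v₀` or `u₀`. A third bad vertex,
say next to `u₀`, lets us recolour `v₀` with a third old colour after which every bad vertex is
adjacent to `u₀`. Otherwise `v₀, u₀` are the only bad vertices; by regularity some neighbour `w` of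
`v₀` misses some neighbour `w'` of `u₀` (else `N(w) = {v₀} ∪ N(u₀) \ {v₀}` is monochromatic), and
`S = {w, w'}` works.
-/

def NbhdMonochromatic {V α : Type*} (G : SimpleGraph V) (c : V → α) (v : V) : Prop :=
  ∀ ⦃a b⦄, G.Adj v a → G.Adj v b → c a = c b

def DiamLeTwo {V : Type*} (G : SimpleGraph V) : Prop :=
  ∀ u v : V, u ≠ v → G.Adj u v ∨ ∃ w, G.Adj u w ∧ G.Adj w v

theorem ProperColoring.update {V α : Type*} [DecidableEq V] {G : SimpleGraph V} {c : V → α}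
    (hc : ProperColoring G c) {v : V} {t : α} (ht : ∀ y, G.Adj v y → c y ≠ t) :
    ProperColoring G (Function.update c v t) := by
  intro a b hab
  rcases eq_or_ne a v with rfl | ha
  · rw [Function.update_self, Function.update_of_ne hab.ne']
    exact (ht b hab).symm
  rcases eq_or_ne b v with rfl | hb
  · rw [Function.update_self, Function.update_of_ne ha]
    exact ht a hab.symm
  rw [Function.update_of_ne ha, Function.update_of_ne hb]
  exact hc hab

theorem Fin.exists_ne_ne {n : ℕ} (hn : 3 ≤ n) (a b : Fin n) : ∃ t : Fin n, t ≠ a ∧ t ≠ b := by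
  obtain ⟨t, -, ht⟩ := Finset.exists_mem_notMem_of_card_lt_card (s := {a, b}) (t := univ)
    (by rw [card_univ, Fintype.card_fin]; exact card_le_two.trans_lt (by omega))
  simp only [mem_insert, mem_singleton, not_or] at ht
  exact ⟨t, ht⟩

section Degree

variable {V : Type*} [Fintype V] {G : SimpleGraph V} [DecidableRel G.Adj]

theorem exists_adj_notMem_of_card_lt_degree (s : Finset V) {v : V} (h : #s < G.degree v) :
    ∃ z, G.Adj v z ∧ z ∉ s := by
  by_contra! hs
  have hsub : G.neighborFinset v ⊆ s := fun z hz => hs z ((G.mem_neighborFinset v z).mp hz)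
  have := card_le_card hsub
  rw [card_neighborFinset_eq_degree] at this
  omega

theorem colorable_succ_of_degree_le {d : ℕ} (h : ∀ v, G.degree v ≤ d) : G.Colorable (d + 1) := by
  classical
  suffices ∀ s : Finset V, ∃ f : V → Fin (d + 1), ∀ a ∈ s, ∀ b ∈ s, G.Adj a b → f a ≠ f b by
    obtain ⟨f, hf⟩ := this univ
    exact ⟨Coloring.mk f fun {a b} hab => hf a (mem_univ a) b (mem_univ b) hab⟩
  intro s
  induction s using Finset.induction_on with
  | empty => exact ⟨0, by simp⟩
  | insert x s _ ih =>
    obtain ⟨f, hf⟩ := ih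
    obtain ⟨t, -, ht⟩ := exists_mem_notMem_of_card_lt_card
      (s := (G.neighborFinset x).image f) (t := univ) (by
        rw [card_univ, Fintype.card_fin]
        exact card_image_le.trans_lt (by rw [card_neighborFinset_eq_degree]; linarith [h x]))
    have hfree : ∀ y, G.Adj x y → f y ≠ t := fun y hy hyt =>
      ht (mem_image.mpr ⟨y, (G.mem_neighborFinset x y).mpr hy, hyt⟩)
    refine ⟨Function.update f x t, fun a ha b hb hab => ?_⟩
    rcases eq_or_ne a x with rfl | hax
    · rw [Function.update_self, Function.update_of_ne hab.ne']
      exact (hfree b hab).symm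
    rcases eq_or_ne b x with rfl | hbx
    · rw [Function.update_self, Function.update_of_ne hax]
      exact hfree a hab.symm
    rw [Function.update_of_ne hax, Function.update_of_ne hbx]
    exact hf a ((mem_insert.mp ha).resolve_left hax) b ((mem_insert.mp hb).resolve_left hbx) hab

end Degree

namespace DiamLeTwo

variable {V α : Type*} {G : SimpleGraph V} {c : V → α}

theorem color_eq_of_not_adj (hG : DiamLeTwo G) {u v x : V} {a b : α}
    (hu : ∀ y, G.Adj u y → c y = a) (hv : ∀ y, G.Adj v y → c y = b) (huv : ¬ G.Adj u v)
    (hx : G.Adj u x) : a = b := by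
  rcases eq_or_ne u v with rfl | hne
  · exact (hu x hx).symm.trans (hv x hx)
  rcases hG u v hne with h | ⟨w, huw, hwv⟩
  · exact absurd h huv
  · exact (hu w huw).symm.trans (hv w hwv.symm)

theorem neighborSet_subset_of_not_adj (hG : DiamLeTwo G) (hc : ProperColoring G c) {u v : V}
    {a : α} (hu : ∀ y, G.Adj u y → c y = a) (hv : ∀ y, G.Adj v y → c y = a)
    (huv : ¬ G.Adj u v) : G.neighborSet v ⊆ G.neighborSet u := by
  intro w hw
  by_contra huw
  have hne : u ≠ w := by
    rintro rfl
    exact huv hw.symm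
  rcases hG u w hne with h | ⟨z, huz, hzw⟩
  · exact huw h
  · exact hc hzw ((hu z huz).trans (hv w hw).symm)

theorem adj_or_adj_of_nbhdMonochromatic (hG : DiamLeTwo G) (hc : ProperColoring G c)
    {v₀ u₀ v x : V} (hv₀ : NbhdMonochromatic G c v₀) (hu₀ : NbhdMonochromatic G c u₀)
    (h₀ : G.Adj v₀ u₀) (hv : NbhdMonochromatic G c v) (hx : G.Adj v x) :
    G.Adj v v₀ ∨ G.Adj v u₀ := by
  by_contra! hnot
  have h₁ : c x = c u₀ :=
    hG.color_eq_of_not_adj (fun y hy => hv hy hx) (fun y hy => hv₀ hy h₀) hnot.1 hx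
  have h₂ : c x = c v₀ :=
    hG.color_eq_of_not_adj (fun y hy => hv hy hx) (fun y hy => hu₀ hy h₀.symm) hnot.2 hx
  exact hc h₀ (h₂.symm.trans h₁)

end DiamLeTwo

section DynamicColoring

variable {V : Type*} [Fintype V] {G : SimpleGraph V} [DecidableRel G.Adj] {n : ℕ} {c : V → Fin n}

theorem exists_dynColoring_of_isIndepSet (hc : ProperColoring G c) {S : Set V}
    (hS : G.IsIndepSet S) (hout : ∀ v, 2 ≤ G.degree v → ∃ z, G.Adj v z ∧ z ∉ S)
    (hin : ∀ v, 2 ≤ G.degree v → NbhdMonochromatic G c v → ∃ x, G.Adj v x ∧ x ∈ S) :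
    ∃ c' : V → Fin (n + 1), DynColoring G c' := by
  classical
  let c' : V → Fin (n + 1) := fun y => if y ∈ S then Fin.last n else (c y).castSucc
  have hnew : ∀ {x z}, x ∈ S → z ∉ S → c' x ≠ c' z := by
    intro x z hx hz
    simp only [c', if_pos hx, if_neg hz]
    exact (Fin.castSucc_lt_last _).ne'
  have hold : ∀ {x z}, x ∉ S → z ∉ S → c x ≠ c z → c' x ≠ c' z := by
    intro x z hx hz hxz
    simp only [c', if_neg hx, if_neg hz]
    exact fun h => hxz (Fin.castSucc_inj.mp h)
  refine ⟨c', fun a b hab => ?_, fun v hv => ?_⟩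
  · by_cases ha : a ∈ S <;> by_cases hb : b ∈ S
    · exact absurd hab (hS ha hb hab.ne)
    · exact hnew ha hb
    · exact (hnew hb ha).symm
    · exact hold ha hb (hc hab)
  · obtain ⟨z, hvz, hz⟩ := hout v hv
    by_cases hx : ∃ x, G.Adj v x ∧ x ∈ S
    · obtain ⟨x, hvx, hx⟩ := hx
      exact ⟨x, z, hvx, hvz, hnew hx hz⟩
    · push Not at hx
      have hmono : ¬ NbhdMonochromatic G c v := fun hm =>
        let ⟨x, hvx, hxS⟩ := hin v hv hm
        hx x hvx hxS
      simp only [NbhdMonochromatic, not_forall] at hmono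
      obtain ⟨a, b, ha, hb, hab⟩ := hmono
      exact ⟨a, b, ha, hb, hold (hx a ha) (hx b hb) hab⟩

theorem exists_dynColoring_of_forall_adj (hc : ProperColoring G c) (x₀ : V)
    (h : ∀ v, 2 ≤ G.degree v → NbhdMonochromatic G c v → G.Adj v x₀) :
    ∃ c' : V → Fin (n + 1), DynColoring G c' :=
  exists_dynColoring_of_isIndepSet hc (S := {x₀}) (Set.pairwise_singleton _ _)
    (fun v hv => by
      simpa using exists_adj_notMem_of_card_lt_degree {x₀} (by rw [card_singleton]; omega))
    (fun v hv hm => ⟨x₀, h v hv hm, rfl⟩)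

theorem DiamLeTwo.exists_dynColoring_of_not_adj (hG : DiamLeTwo G) (hc : ProperColoring G c)
    (hpair : ∀ u v, 2 ≤ G.degree u → 2 ≤ G.degree v →
      NbhdMonochromatic G c u → NbhdMonochromatic G c v → ¬ G.Adj u v) :
    ∃ c' : V → Fin (n + 1), DynColoring G c' := by
  by_cases hbad : ∃ v, 2 ≤ G.degree v ∧ NbhdMonochromatic G c v
  · obtain ⟨v₀, hdeg₀, hv₀⟩ := hbad
    obtain ⟨x₀, hx₀⟩ := G.degree_pos_iff_exists_adj v₀ |>.mp (by omega)
    refine exists_dynColoring_of_forall_adj hc x₀ fun v hdeg hv => ?_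
    obtain ⟨y, hy⟩ := G.degree_pos_iff_exists_adj v |>.mp (by omega)
    have hnadj : ¬ G.Adj v v₀ := hpair v v₀ hdeg hdeg₀ hv hv₀
    have hcol : c y = c x₀ :=
      hG.color_eq_of_not_adj (fun z hz => hv hz hy) (fun z hz => hv₀ hz hx₀) hnadj hy
    exact hG.neighborSet_subset_of_not_adj hc (fun z hz => (hv hz hy).trans hcol)
      (fun z hz => hv₀ hz hx₀) hnadj hx₀
  · push Not at hbad
    refine exists_dynColoring_of_isIndepSet hc (S := ∅) (Set.pairwise_empty _) (fun v hv => ?_)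
      (fun v hv hm => absurd hm (hbad v hv))
    obtain ⟨z, hz⟩ := G.degree_pos_iff_exists_adj v |>.mp (by omega)
    exact ⟨z, hz, Set.notMem_empty z⟩

/-- After recolouring `v₀` with a third colour `t`, every bad vertex is adjacent to `u₀`: a bad
neighbour of `v₀` would see only `t`, while `v₁`, within distance two of it, sees only `c u₀`. -/
theorem DiamLeTwo.exists_dynColoring_of_nbhdMonochromatic_path (hG : DiamLeTwo G)
    (hc : ProperColoring G c) (hn : 3 ≤ n) {v₀ u₀ v₁ : V} (hv₀ : NbhdMonochromatic G c v₀)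
    (hu₀ : NbhdMonochromatic G c u₀) (hv₁ : NbhdMonochromatic G c v₁) (h₀ : G.Adj v₀ u₀)
    (h₁ : G.Adj u₀ v₁) (hne : v₁ ≠ v₀) :
    ∃ c' : V → Fin (n + 1), DynColoring G c' := by
  classical
  obtain ⟨t, htv, htu⟩ := Fin.exists_ne_ne hn (c v₀) (c u₀)
  have hNv₀ : ∀ y, G.Adj v₀ y → c y = c u₀ := fun y hy => hv₀ hy h₀
  have hNv₁ : ∀ y, G.Adj v₁ y → c y = c u₀ := fun y hy => hv₁ hy h₁.symm
  have hcv₁ : c v₁ = c v₀ := hu₀ h₁ h₀.symm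
  have hv₁v₀ : ¬ G.Adj v₁ v₀ := fun h => hc h₀ (hcv₁.symm.trans (hNv₀ v₁ h.symm))
  set c₁ := Function.update c v₀ t
  have hc₁ : ProperColoring G c₁ :=
    hc.update fun y hy hyt => htu (hyt.symm.trans (hNv₀ y hy))
  have hc₁c : ∀ y, y ≠ v₀ → c₁ y = c y := fun y hy => Function.update_of_ne hy t c
  refine exists_dynColoring_of_forall_adj hc₁ u₀ fun v hdeg hv => ?_
  obtain ⟨y, hy⟩ := G.degree_pos_iff_exists_adj v |>.mp (by omega)
  by_cases hvv₀ : G.Adj v v₀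
  · exfalso
    have hN : ∀ z, G.Adj v z → c₁ z = t := fun z hz =>
      (hv hz hvv₀).trans (Function.update_self v₀ t c)
    have hN₁ : ∀ z, G.Adj v₁ z → c₁ z = c u₀ := fun z hz => by
      rw [hc₁c z (fun h => hv₁v₀ (h ▸ hz))]
      exact hNv₁ z hz
    have hvv₁ : ¬ G.Adj v v₁ := fun h => htv (by rw [← hN v₁ h, hc₁c v₁ hne, hcv₁])
    exact htu (hG.color_eq_of_not_adj hN hN₁ hvv₁ hvv₀)
  · have hmono : NbhdMonochromatic G c v := fun a b ha hb => by
      rw [← hc₁c a (fun h => hvv₀ (h ▸ ha)), ← hc₁c b (fun h => hvv₀ (h ▸ hb))]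
      exact hv ha hb
    exact (hG.adj_or_adj_of_nbhdMonochromatic hc hv₀ hu₀ h₀ hmono hy).resolve_left hvv₀

theorem exists_dynColoring_of_nbhdMonochromatic_only_edge {k : ℕ}
    (hreg : G.IsRegularOfDegree k) (hk : 3 ≤ k) (hc : ProperColoring G c) {v₀ u₀ : V}
    (hv₀ : NbhdMonochromatic G c v₀) (hu₀ : NbhdMonochromatic G c u₀) (h₀ : G.Adj v₀ u₀)
    (honly : ∀ v, NbhdMonochromatic G c v → v = v₀ ∨ v = u₀) :
    ∃ c' : V → Fin (n + 1), DynColoring G c' := by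
  classical
  obtain ⟨w, hw, hwu₀⟩ := exists_mem_ne (s := G.neighborFinset v₀)
    (by rw [card_neighborFinset_eq_degree, hreg v₀]; omega) u₀
  rw [mem_neighborFinset] at hw
  obtain ⟨w', hw', hw'v₀, hww'⟩ : ∃ w', G.Adj u₀ w' ∧ w' ≠ v₀ ∧ ¬ G.Adj w w' := by
    by_contra! hall
    have hsub : insert v₀ ((G.neighborFinset u₀).erase v₀) ⊆ G.neighborFinset w := by
      intro y hy
      rw [mem_neighborFinset]
      rcases mem_insert.mp hy with rfl | hy
      · exact hw.symm
      · obtain ⟨hyv₀, hy⟩ := mem_erase.mp hy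
        exact hall y ((G.mem_neighborFinset u₀ y).mp hy) hyv₀
    have hNw := eq_of_subset_of_card_le hsub (by
      rw [card_insert_of_notMem (notMem_erase v₀ _),
        card_erase_of_mem ((G.mem_neighborFinset u₀ v₀).mpr h₀.symm),
        card_neighborFinset_eq_degree, card_neighborFinset_eq_degree, hreg w, hreg u₀]
      omega)
    have hcol : ∀ y, G.Adj w y → c y = c v₀ := fun y hy => by
      rw [← mem_neighborFinset, ← hNw] at hy
      rcases mem_insert.mp hy with rfl | hy
      · rfl
      · exact hu₀ ((G.mem_neighborFinset u₀ y).mp (mem_of_mem_erase hy)) h₀.symm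
    rcases honly w fun a b ha hb => (hcol a ha).trans (hcol b hb).symm with rfl | rfl
    · exact hw.ne rfl
    · exact hwu₀ rfl
  refine exists_dynColoring_of_isIndepSet hc (S := ({w, w'} : Finset V)) ?_ (fun v _ => ?_)
    (fun v _ hv => ?_)
  · rw [coe_pair]
    exact Set.pairwise_pair.mpr fun _ => ⟨hww', fun h => hww' h.symm⟩
  · simpa using exists_adj_notMem_of_card_lt_degree {w, w'} (v := v)
      (card_le_two.trans_lt (by rw [hreg v]; omega))
  · rcases honly v hv with rfl | rfl
    · exact ⟨w, hw, by simp⟩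
    · exact ⟨w', hw', by simp⟩

theorem DiamLeTwo.exists_dynColoring_succ (hG : DiamLeTwo G) {k : ℕ}
    (hreg : G.IsRegularOfDegree k) (hk : 3 ≤ k) (hn : 3 ≤ n) (hc : ProperColoring G c) :
    ∃ c' : V → Fin (n + 1), DynColoring G c' := by
  by_cases hpair : ∃ v₀ u₀, NbhdMonochromatic G c v₀ ∧ NbhdMonochromatic G c u₀ ∧ G.Adj v₀ u₀
  · obtain ⟨v₀, u₀, hv₀, hu₀, h₀⟩ := hpair
    by_cases hthird : ∃ v, NbhdMonochromatic G c v ∧ v ≠ v₀ ∧ v ≠ u₀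
    · obtain ⟨v₁, hv₁, hne₀, hne₁⟩ := hthird
      obtain ⟨y, hy⟩ := G.degree_pos_iff_exists_adj v₁ |>.mp (by rw [hreg v₁]; omega)
      rcases hG.adj_or_adj_of_nbhdMonochromatic hc hv₀ hu₀ h₀ hv₁ hy with h | h
      · exact hG.exists_dynColoring_of_nbhdMonochromatic_path hc hn hu₀ hv₀ hv₁ h₀.symm h.symm
          hne₁
      · exact hG.exists_dynColoring_of_nbhdMonochromatic_path hc hn hv₀ hu₀ hv₁ h₀ h.symm hne₀
    · push Not at hthird
      exact exists_dynColoring_of_nbhdMonochromatic_only_edge hreg hk hc hv₀ hu₀ h₀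
        fun v hv => or_iff_not_imp_left.mpr (hthird v hv)
  · push Not at hpair
    exact hG.exists_dynColoring_of_not_adj hc fun u v _ _ hu hv => hpair u v hu hv

end DynamicColoring

/-- If G is k-regular, has diameter at most 2 and χ(G) ≥ 4,
then χ₂(G) − χ(G) ≤ 1. -/
theorem stmt7 {V : Type*} [Fintype V] (G : SimpleGraph V) [DecidableRel G.Adj]
    (k : ℕ) (hreg : G.IsRegularOfDegree k)
    (hdiam : ∀ u v : V, u ≠ v → G.Adj u v ∨ ∃ w, G.Adj u w ∧ G.Adj w v)
    (h : 4 ≤ chi G) :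
    dynChi G ≤ chi G + 1 := by
  obtain ⟨C⟩ : G.Colorable (chi G) :=
    Nat.sInf_mem (⟨_, G.colorable_of_fintype⟩ : {n | G.Colorable n}.Nonempty)
  have h3 : ¬ G.Colorable 3 := fun h3 => by
    have : chi G ≤ 3 := Nat.sInf_le h3
    omega
  have hk : 3 ≤ k := by
    by_contra! hk
    exact h3 ((colorable_succ_of_degree_le fun v => (hreg v).le).mono (by omega))
  obtain ⟨c', hc'⟩ := DiamLeTwo.exists_dynColoring_succ hdiam hreg hk (by omega)
    (c := fun v => C v) fun _ _ hab => C.valid hab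
  exact Nat.sInf_le ⟨c', hc'⟩
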